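/- Let B_w be the bilateral weighted backward shift on c0(ℤ) (or ℓp(ℤ)) with weights w(k) = 1/2 for k ≥ 0 and w(k) = 1 for k < 0. Then B_w does not have the periodic shadowing property: there exists ε > 0 such that for every δ > 0 there is a periodic δ-pseudotrajectory of B_w starting and ending at 0 which is not contained in B(0, ε). -/

import Mathlib

open Finset

/-- `ℓᵖ(ℤ)`. -/
abbrev LpZ (p : ENNReal) := lp (fun _ : ℤ => ℝ) p

/-- `c₀(ℤ)`. -/
abbrev C0Z := ZeroAtInftyContinuousMap ℤ ℝ

section Defs

variable {X : Type*} [NormedAddCommGroup X] [NormedSpace ℝ X]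

/-- `o : ℤ → X` is a full orbit of `T`. -/
def IsOrbit (T : X ≃L[ℝ] X) (o : ℤ → X) : Prop := ∀ j : ℤ, o (j + 1) = T (o j)

/-- `(x_j)_{j ∈ ℤ}` is a `δ`-pseudotrajectory of `T`. -/
def IsPT (T : X ≃L[ℝ] X) (δ : ℝ) (x : ℤ → X) : Prop :=
  ∀ j : ℤ, ‖T (x j) - x (j + 1)‖ < δ

/-- A sequence `x : ℤ → X` is periodic. -/
def IsPer (x : ℤ → X) : Prop := ∃ p : ℕ, 1 ≤ p ∧ ∀ j : ℤ, x (j + p) = x j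

/-- The shadowing property: every `δ`-pseudotrajectory is `ε`-shadowed by some full orbit. -/
def SP (T : X ≃L[ℝ] X) : Prop :=
  ∀ ε > (0 : ℝ), ∃ δ > (0 : ℝ), ∀ x : ℤ → X, IsPT T δ x →
    ∃ o : ℤ → X, IsOrbit T o ∧ ∀ j : ℤ, ‖x j - o j‖ < ε

/-- The periodic shadowing property: every periodic `δ`-pseudotrajectory is `ε`-shadowed
by (the orbit of) a periodic point. -/
def PSP (T : X ≃L[ℝ] X) : Prop :=
  ∀ ε > (0 : ℝ), ∃ δ > (0 : ℝ), ∀ x : ℤ → X, IsPT T δ x → IsPer x →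
    ∃ o : ℤ → X, IsOrbit T o ∧ IsPer o ∧ ∀ j : ℤ, ‖x j - o j‖ < ε

/-- `x` is a chain recurrent point of `T`: for every `δ > 0` there is a finite
`δ`-chain from `x` to `x`. -/
def ChainRec (T : X →L[ℝ] X) (x : X) : Prop :=
  ∀ δ > (0 : ℝ), ∃ (k : ℕ) (c : ℕ → X), 1 ≤ k ∧ c 0 = x ∧ c k = x ∧
    ∀ j < k, ‖T (c j) - c (j + 1)‖ < δ

/-- `T` has no nontrivial periodic point. -/
def OnlyTrivialPer (T : X →L[ℝ] X) : Prop :=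
  ∀ x : X, (∃ p : ℕ, 1 ≤ p ∧ (T ^ p) x = x) → x = 0

end Defs

/-!
Along the coordinates `k ≥ 0` the shift contracts by `1/2`, so a periodic point, whose
coordinates are bounded, vanishes there; an iterate of the shift carries every negative
coordinate to a nonnegative one, so the only periodic point is `0`. On the coordinates `k < 0`
the shift is an isometric translation, so small jumps of size `δ/2` climb along `e₋₁, e₋₂, …`
up to the vector `n δ/2 · e₋ₙ` and back down to `0`; repeating this tent gives periodic
`δ`-pseudotrajectories of norm at least `1`. A periodic point shadowing one of them would be
`0`, which is `1` away.
-/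

section Shadowing

variable {X : Type*} [NormedAddCommGroup X] [NormedSpace ℝ X] {T : X ≃L[ℝ] X}

theorem IsOrbit.apply_add_nat {o : ℤ → X} (ho : IsOrbit T o) (j : ℤ) (k : ℕ) :
    o (j + k) = T^[k] (o j) := by
  induction k with
  | zero => simp
  | succ k ih => rw [Nat.cast_succ, ← add_assoc, ho, ih, Function.iterate_succ_apply']

theorem not_psp_of_onlyTrivialPer (hT : OnlyTrivialPer (T : X →L[ℝ] X)) {ε : ℝ} (hε : 0 < ε)
    (hx : ∀ δ > (0 : ℝ), ∃ x : ℤ → X, IsPT T δ x ∧ IsPer x ∧ ∃ j, ε ≤ ‖x j‖) : ¬ PSP T := by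
  intro hP
  obtain ⟨δ, hδ, hshadow⟩ := hP ε hε
  obtain ⟨x, hxT, hxP, j, hj⟩ := hx δ hδ
  obtain ⟨o, ho, ⟨q, hq, hoq⟩, hclose⟩ := hshadow x hxT hxP
  have hoj : o j = 0 := hT _ ⟨q, hq, by
    rw [FunLike.coe_pow_eq_iterate, ContinuousLinearEquiv.coe_coe, ← ho.apply_add_nat, hoq]⟩
  have := hclose j
  rw [hoj, sub_zero] at this
  linarith

end Shadowing

/-- What the argument uses of `ℓᵖ(ℤ)` and `c₀(ℤ)`, so that it is carried out once for both. -/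
structure IntSeqSpace (X : Type*) [NormedAddCommGroup X] where
  coord : X →+ (ℤ → ℝ)
  coord_injective : Function.Injective coord
  abs_coord_le (x : X) (n : ℤ) : |coord x n| ≤ ‖x‖
  single : ℤ → ℝ → X
  coord_single (k : ℤ) (c : ℝ) : coord (single k c) = Pi.single k c
  norm_single_le (k : ℤ) (c : ℝ) : ‖single k c‖ ≤ |c|

namespace IntSeqSpace

variable {X : Type*} [NormedAddCommGroup X] (S : IntSeqSpace X)

theorem single_zero (k : ℤ) : S.single k 0 = 0 :=
  S.coord_injective <| by rw [coord_single, Pi.single_zero, map_zero]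

theorem single_sub (k : ℤ) (a b : ℝ) : S.single k a - S.single k b = S.single k (a - b) :=
  S.coord_injective <| by rw [map_sub, coord_single, coord_single, coord_single, Pi.single_sub]

theorem apply_single {w : ℤ → ℝ} {T : X → X}
    (hT : ∀ x n, S.coord (T x) n = w (n + 1) * S.coord x (n + 1)) (k : ℤ) (c : ℝ) :
    T (S.single k c) = S.single (k - 1) (w k * c) :=
  S.coord_injective <| funext fun n => by
    rw [hT, coord_single, coord_single, Pi.single_apply, Pi.single_apply]
    by_cases hn : n + 1 = k
    · rw [if_pos hn, if_pos (by omega), hn]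
    · rw [if_neg hn, if_neg (by omega), mul_zero]

theorem coord_iterate_apply {w : ℤ → ℝ} {T : X → X}
    (hT : ∀ x n, S.coord (T x) n = w (n + 1) * S.coord x (n + 1)) (k : ℕ) (y : X) (m : ℤ) :
    S.coord (T^[k] y) m = (∏ i ∈ range k, w (m + i + 1)) * S.coord y (m + k) := by
  induction k generalizing y with
  | zero => simp
  | succ k ih =>
    rw [Function.iterate_succ_apply, ih, hT, prod_range_succ, mul_assoc]
    push_cast
    ring_nf

section PeriodicPoints

variable [NormedSpace ℝ X] {w : ℤ → ℝ} {T : X →L[ℝ] X}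

theorem coord_eq_zero_of_isPeriodicPt (hw : ∀ k, 0 < k → w k = 1 / 2)
    (hT : ∀ x n, S.coord (T x) n = w (n + 1) * S.coord x (n + 1)) {q : ℕ} (hq : 0 < q) {y : X}
    (hy : Function.IsPeriodicPt T q y) {m : ℤ} (hm : 0 ≤ m) : S.coord y m = 0 := by
  have hprod (k : ℕ) : ∏ i ∈ range k, w (m + i + 1) = (1 / 2 : ℝ) ^ k := by
    rw [prod_congr rfl fun i _ => hw _ (by omega), prod_const, card_range]
  have hbound (k : ℕ) : |S.coord y m| ≤ (1 / 2 : ℝ) ^ k * ‖y‖ :=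
    calc |S.coord y m| = |S.coord (T^[q * k] y) m| := by rw [(hy.mul_const k).eq]
      _ = (1 / 2 : ℝ) ^ (q * k) * |S.coord y (m + (q * k : ℕ))| := by
        rw [S.coord_iterate_apply hT, hprod, abs_mul, abs_of_pos (by positivity)]
      _ ≤ (1 / 2 : ℝ) ^ k * ‖y‖ :=
        mul_le_mul (pow_le_pow_of_le_one (by norm_num) (by norm_num)
          (Nat.le_mul_of_pos_left k hq)) (S.abs_coord_le y _) (abs_nonneg _) (by positivity)
  have hlim : Filter.Tendsto (fun k : ℕ => (1 / 2 : ℝ) ^ k * ‖y‖) Filter.atTop (nhds 0) := by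
    simpa using (tendsto_pow_atTop_nhds_zero_of_lt_one (r := (1 / 2 : ℝ)) (by norm_num)
      (by norm_num)).mul_const ‖y‖
  exact abs_nonpos_iff.mp (ge_of_tendsto' hlim hbound)

theorem eq_zero_of_isPeriodicPt (hw : ∀ k, 0 < k → w k = 1 / 2)
    (hT : ∀ x n, S.coord (T x) n = w (n + 1) * S.coord x (n + 1)) {q : ℕ} (hq : 0 < q) {y : X}
    (hy : Function.IsPeriodicPt T q y) : y = 0 := by
  refine S.coord_injective (funext fun m => ?_)
  rw [map_zero, Pi.zero_apply]
  rcases le_or_gt 0 m with hm | hm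
  · exact S.coord_eq_zero_of_isPeriodicPt hw hT hq hy hm
  · have hshift : 0 ≤ m + (q * m.natAbs : ℕ) := by
      have hq' : (1 : ℤ) ≤ q := by exact_mod_cast hq
      rw [Nat.cast_mul, Int.natCast_natAbs, abs_of_neg hm]
      nlinarith
    rw [← (hy.mul_const m.natAbs).eq, S.coord_iterate_apply hT,
      S.coord_eq_zero_of_isPeriodicPt hw hT hq hy hshift, mul_zero]

theorem onlyTrivialPer (hw : ∀ k, 0 < k → w k = 1 / 2)
    (hT : ∀ x n, S.coord (T x) n = w (n + 1) * S.coord x (n + 1)) : OnlyTrivialPer T := by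
  rintro y ⟨q, hq, hy⟩
  rw [FunLike.coe_pow_eq_iterate] at hy
  exact S.eq_zero_of_isPeriodicPt hw hT hq hy

end PeriodicPoints

section Tent

variable {w : ℤ → ℝ} {δ : ℝ} {N : ℤ}

/-- The `t`-th term (`0 ≤ t ≤ N`) of the chain `0, δe₋₁, …, nδe₋ₙ, …, δe₋₂ₙ₊₁, 0` of the
paper (`N = 2n`), with `δ` halved so that the jumps are strictly smaller than `δ`. -/
noncomputable def tentPulse (δ : ℝ) (N t : ℤ) : X :=
  S.single (-t) (δ / 2 * (min t (N - t) : ℤ))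

noncomputable def tentTrajectory (δ : ℝ) (N : ℕ) (j : ℤ) : X :=
  S.tentPulse δ N (j % N)

theorem tentPulse_zero (hN : 0 ≤ N) : S.tentPulse δ N 0 = 0 := by
  rw [tentPulse, min_eq_left (by omega), Int.cast_zero, mul_zero, single_zero]

theorem tentPulse_self (hN : 0 ≤ N) : S.tentPulse δ N N = 0 := by
  rw [tentPulse, min_eq_right (by omega), sub_self, Int.cast_zero, mul_zero, single_zero]

theorem tentPulse_emod_add_one (hN : 0 < N) (j : ℤ) :
    S.tentPulse δ N ((j + 1) % N) = S.tentPulse δ N (j % N + 1) := by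
  rw [← Int.emod_add_emod]
  have := Int.emod_nonneg j hN.ne'
  rcases (Int.add_one_le_of_lt (Int.emod_lt_of_pos j hN)).lt_or_eq with hlt | heq
  · rw [Int.emod_eq_of_lt (by omega) hlt]
  · rw [heq, Int.emod_self, S.tentPulse_zero hN.le, S.tentPulse_self hN.le]

theorem norm_apply_tentPulse_sub_le (hw : ∀ k, k < 0 → w k = 1) {T : X → X}
    (hT : ∀ x n, S.coord (T x) n = w (n + 1) * S.coord x (n + 1)) (hδ : 0 ≤ δ) (hN : 0 ≤ N)
    {t : ℤ} (ht : 0 ≤ t) : ‖T (S.tentPulse δ N t) - S.tentPulse δ N (t + 1)‖ ≤ δ / 2 := by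
  have hweight : w (-t) * (δ / 2 * (min t (N - t) : ℤ)) = δ / 2 * (min t (N - t) : ℤ) := by
    rcases ht.eq_or_lt with rfl | ht
    · rw [min_eq_left (by omega), Int.cast_zero, mul_zero, mul_zero]
    · rw [hw _ (by omega), one_mul]
  have hslope : |((min t (N - t) : ℤ) : ℝ) - (min (t + 1) (N - (t + 1)) : ℤ)| ≤ 1 := by
    rw [← Int.cast_sub, ← Int.cast_abs]
    exact_mod_cast abs_le.2 ⟨by omega, by omega⟩
  rw [tentPulse, tentPulse, S.apply_single hT, hweight, show -t - 1 = -(t + 1) by ring,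
    single_sub, ← mul_sub]
  refine (S.norm_single_le _ _).trans ?_
  rw [abs_mul, abs_of_nonneg (by positivity)]
  exact mul_le_of_le_one_right (by positivity) hslope

theorem isPer_tentTrajectory {N : ℕ} (hN : 0 < N) : IsPer (S.tentTrajectory δ N) :=
  ⟨N, hN, fun j => by rw [tentTrajectory, tentTrajectory, Int.add_emod_right]⟩

variable [NormedSpace ℝ X]

theorem isPT_tentTrajectory (hw : ∀ k, k < 0 → w k = 1) {T : X ≃L[ℝ] X}
    (hT : ∀ x n, S.coord (T x) n = w (n + 1) * S.coord x (n + 1)) (hδ : 0 < δ) {N : ℕ}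
    (hN : 0 < N) : IsPT T δ (S.tentTrajectory δ N) := fun j => by
  rw [tentTrajectory, tentTrajectory, S.tentPulse_emod_add_one (by omega)]
  exact (S.norm_apply_tentPulse_sub_le hw hT hδ.le (by omega)
    (Int.emod_nonneg j (by omega))).trans_lt (half_lt_self hδ)

theorem exists_periodic_pseudotrajectory (hw : ∀ k, k < 0 → w k = 1) {T : X ≃L[ℝ] X}
    (hT : ∀ x n, S.coord (T x) n = w (n + 1) * S.coord x (n + 1)) (hδ : 0 < δ) :
    ∃ x : ℤ → X, IsPT T δ x ∧ IsPer x ∧ (∃ j, x j = 0) ∧ ∃ j, 1 ≤ ‖x j‖ := by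
  obtain ⟨n, hn⟩ := exists_nat_gt (2 / δ)
  have hn0 : 0 < n := by exact_mod_cast (div_pos two_pos hδ).trans hn
  refine ⟨S.tentTrajectory δ (2 * n), S.isPT_tentTrajectory hw hT hδ (by omega),
    S.isPer_tentTrajectory (by omega), ⟨0, ?_⟩, ⟨n, ?_⟩⟩
  · rw [tentTrajectory, Int.zero_emod, S.tentPulse_zero (by omega)]
  · have hpeak : S.tentTrajectory δ (2 * n) n = S.single (-n) (δ / 2 * n) := by
      rw [tentTrajectory, tentPulse, Int.emod_eq_of_lt (by omega) (by omega),
        min_eq_left (by omega), Int.cast_natCast]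
    calc 1 ≤ δ / 2 * n := by rw [div_lt_iff₀ hδ] at hn; linarith
      _ ≤ |S.coord (S.single (-n) (δ / 2 * n)) (-n)| := by
        rw [coord_single, Pi.single_eq_same]
        exact le_abs_self _
      _ ≤ ‖S.tentTrajectory δ (2 * n) n‖ := hpeak ▸ S.abs_coord_le _ _

end Tent

theorem not_psp_of_weights [NormedSpace ℝ X] {w : ℤ → ℝ} (hw_pos : ∀ k, 0 < k → w k = 1 / 2)
    (hw_neg : ∀ k, k < 0 → w k = 1) (T : X ≃L[ℝ] X)
    (hT : ∀ x n, S.coord (T x) n = w (n + 1) * S.coord x (n + 1)) :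
    ¬ PSP T ∧ ∃ ε > (0 : ℝ), ∀ δ > (0 : ℝ), ∃ x : ℤ → X,
      IsPT T δ x ∧ IsPer x ∧ (∃ j, x j = 0) ∧ ∃ j, ε ≤ ‖x j‖ := by
  have hx (δ : ℝ) (hδ : 0 < δ) := S.exists_periodic_pseudotrajectory hw_neg hT hδ
  refine ⟨not_psp_of_onlyTrivialPer (S.onlyTrivialPer hw_pos hT) one_pos fun δ hδ => ?_,
    1, one_pos, hx⟩
  obtain ⟨x, hxT, hxP, -, hx1⟩ := hx δ hδ
  exact ⟨x, hxT, hxP, hx1⟩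

end IntSeqSpace

noncomputable def lpIntSeqSpace (p : ENNReal) [Fact (1 ≤ p)] : IntSeqSpace (LpZ p) where
  coord := lp.coeFnAddMonoidHom _ p
  coord_injective _ _ := lp.ext
  abs_coord_le := lp.norm_apply_le_norm (zero_lt_one.trans_le Fact.out).ne'
  single := lp.single p
  coord_single _ _ := rfl
  norm_single_le k c := by
    rw [← Real.norm_eq_abs]
    exact (lp.norm_single (E := fun _ : ℤ => ℝ) (zero_lt_one.trans_le Fact.out) k c).le

noncomputable def c0Single (k : ℤ) (c : ℝ) : C0Z where
  toFun := (Pi.single k c : ℤ → ℝ)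
  continuous_toFun := continuous_of_discreteTopology
  zero_at_infty' := by
    rw [Filter.cocompact_eq_cofinite]
    refine tendsto_const_nhds.congr' ?_
    filter_upwards [Set.finite_singleton k |>.compl_mem_cofinite] with m hm
    exact (Pi.single_eq_of_ne (M := fun _ : ℤ => ℝ) hm c).symm

noncomputable def c0IntSeqSpace : IntSeqSpace C0Z where
  coord := ⟨⟨fun f => ⇑f, rfl⟩, fun _ _ => rfl⟩
  coord_injective _ _ h := DFunLike.coe_injective h
  abs_coord_le f n := by
    rw [← ZeroAtInftyContinuousMap.norm_toBCF_eq_norm]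
    exact BoundedContinuousFunction.norm_coe_le_norm f.toBCF n
  single := c0Single
  coord_single _ _ := rfl
  norm_single_le k c := by
    rw [← ZeroAtInftyContinuousMap.norm_toBCF_eq_norm]
    refine (BoundedContinuousFunction.norm_le (abs_nonneg c)).2 fun m => ?_
    show |(Pi.single k c : ℤ → ℝ) m| ≤ |c|
    rcases eq_or_ne m k with rfl | hm
    · rw [Pi.single_eq_same]
    · rw [Pi.single_eq_of_ne hm, abs_zero]
      exact abs_nonneg c

/-- The bilateral weighted backward shift on `ℓᵖ(ℤ)` or `c₀(ℤ)` with weights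
`w k = 1/2` for `k ≥ 0` and `w k = 1` for `k < 0` does not have the periodic shadowing
property: there is `ε > 0` such that for every `δ > 0` there is a periodic
`δ`-pseudotrajectory starting (and ending) at `0` which is not contained in `B(0, ε)`. -/
theorem stmt14 (w : ℤ → ℝ)
    (hw : ∀ k : ℤ, w k = if 0 ≤ k then (1 / 2 : ℝ) else 1) :
    (∀ (p : ENNReal) [Fact (1 ≤ p)], p ≠ ⊤ →
      ∀ T : LpZ p ≃L[ℝ] LpZ p,
        (∀ (x : LpZ p) (n : ℤ), (T x) n = w (n + 1) * x (n + 1)) →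
        ¬ PSP T ∧
        ∃ ε > (0 : ℝ), ∀ δ > (0 : ℝ), ∃ x : ℤ → LpZ p,
          IsPT T δ x ∧ IsPer x ∧ (∃ j : ℤ, x j = 0) ∧ ∃ j : ℤ, ε ≤ ‖x j‖) ∧
    (∀ T : C0Z ≃L[ℝ] C0Z,
        (∀ (x : C0Z) (n : ℤ), (T x) n = w (n + 1) * x (n + 1)) →
        ¬ PSP T ∧
        ∃ ε > (0 : ℝ), ∀ δ > (0 : ℝ), ∃ x : ℤ → C0Z,
          IsPT T δ x ∧ IsPer x ∧ (∃ j : ℤ, x j = 0) ∧ ∃ j : ℤ, ε ≤ ‖x j‖) := by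
  have hw_pos (k : ℤ) (hk : 0 < k) : w k = 1 / 2 := by rw [hw, if_pos hk.le]
  have hw_neg (k : ℤ) (hk : k < 0) : w k = 1 := by rw [hw, if_neg hk.not_ge]
  exact ⟨fun p _ _ T hT => (lpIntSeqSpace p).not_psp_of_weights hw_pos hw_neg T hT,
    fun T hT => c0IntSeqSpace.not_psp_of_weights hw_pos hw_neg T hT⟩
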